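/- Let P be a partition with largest part P_0 > 0 and P_1 > 0, satisfying P_0 − P*_0 ≥ 2P_1 − 2 and |P| ≤ 2P_0 − 2. Let k ≥ 1 be the largest integer with P_k = P_1, and let Λ be the arithmetic progression generated by P_0 − 1 and P_k − k − 1 (i.e. the coset of the subgroup generated by their difference containing them). Then P⁺_Λ = P, and P⁻_Λ differs from P in exactly two places: (P⁻_Λ)_0 = P_0 − 1, (P⁻_Λ)_k = P_k − 1, and (P⁻_Λ)_i = P_i otherwise; in particular P⁻_Λ and P are 2-linked. -/

import Mathlib

open scoped Classical

/-- A partition: weakly decreasing, eventually zero sequence of nonnegative integers. -/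
def IsPartition (P : ℕ → ℕ) : Prop :=
  (∀ i, P (i + 1) ≤ P i) ∧ ∃ N, ∀ n ≥ N, P n = 0

/-- An arithmetic progression: a proper subset of ℤ whose set of differences is
closed under addition. -/
def IsAP (Λ : Set ℤ) : Prop :=
  Λ ≠ Set.univ ∧
    ∀ a b c d : ℤ, a ∈ Λ → b ∈ Λ → c ∈ Λ → d ∈ Λ →
      ∃ x ∈ Λ, ∃ y ∈ Λ, x - y = (a - b) + (c - d)

/-- Upward displacement of a partition with respect to an arithmetic progression.
The convention `P_{-1} = ∞` is encoded by the disjunct `i = 0`. -/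
noncomputable def upDisp (P : ℕ → ℕ) (Λ : Set ℤ) : ℕ → ℕ :=
  fun i => if ((P i : ℤ) - i) ∈ Λ ∧ (i = 0 ∨ P i < P (i - 1)) then P i + 1 else P i

/-- Downward displacement of a partition with respect to an arithmetic progression. -/
noncomputable def downDisp (P : ℕ → ℕ) (Λ : Set ℤ) : ℕ → ℕ :=
  fun i => if ((P i : ℤ) - i - 1) ∈ Λ ∧ P (i + 1) < P i then P i - 1 else P i

/-- The sum `|P|` of the parts of a partition. -/
noncomputable def psum (P : ℕ → ℕ) : ℕ := ∑ᶠ i, P i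

/-- Two partitions are linked if some arithmetic progression displaces one to the other. -/
def Linked (P Q : ℕ → ℕ) : Prop :=
  ∃ Λ : Set ℤ, IsAP Λ ∧ Q = upDisp P Λ ∧ P = downDisp Q Λ

/-- `k`-linked: linked with sums differing by `k`. -/
def KLinked (k : ℕ) (P Q : ℕ → ℕ) : Prop :=
  Linked P Q ∧ psum Q = psum P + k

/-- A valid sequence of partitions: adjacent pairs are 1-linked or 2-linked. -/
def ValidSeq (n : ℕ) (s : ℕ → ℕ → ℕ) : Prop :=
  (∀ j ≤ n, IsPartition (s j)) ∧
    ∀ j < n, KLinked 1 (s j) (s (j + 1)) ∨ KLinked 2 (s j) (s (j + 1))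

/-- The difficulty `δ(P)`: the least number of 1-linked adjacent pairs in a valid
sequence from the empty partition to `P`. -/
noncomputable def delta (P : ℕ → ℕ) : ℕ :=
  sInf { c | ∃ n s, ValidSeq n s ∧ s 0 = (fun _ => 0) ∧ s n = P ∧
    c = ((Finset.range n).filter fun j => KLinked 1 (s j) (s (j + 1))).card }

/-- The conjugate (dual) partition: `P*_n = #{m : P_m > n}`. -/
noncomputable def conj (P : ℕ → ℕ) : ℕ → ℕ := fun n => Set.ncard { m | n < P m }

/-!
Write `x = P₀ - 1` and `y = P_k - k - 1` for the contents of the removable cells in rows `0`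
and `k`, so that `Λ = y + (x - y)ℤ`. The addable contents `P_i - i` strictly decrease in `i`, and
the hypothesis `P₀ - P*₀ ≥ 2P₁ - 2` puts every addable and removable content of `P` in the window
`(y - (x - y), x + (x - y))`, which meets `Λ` only in `y` and `x`. A removable content is never an
addable one, so no addable cell of `P` has content in `Λ`, and the removable cells with content
in `Λ` are exactly those in rows `0` and `k`. Removing these two cells creates addable cells of
contents `x` and `y` and no other new addable cell, so displacing back recovers `P`.
-/

open Function Set

def apGen (x y : ℤ) : Set ℤ := {n | ∃ j : ℤ, n = y + j * (x - y)}

lemma left_mem_apGen (x y : ℤ) : x ∈ apGen x y := ⟨1, by ring⟩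

lemma right_mem_apGen (x y : ℤ) : y ∈ apGen x y := ⟨0, by ring⟩

lemma isAP_apGen {x y : ℤ} (h : ¬IsUnit (x - y)) : IsAP (apGen x y) := by
  refine ⟨fun huniv => h ?_, ?_⟩
  · obtain ⟨j, hj⟩ : y + 1 ∈ apGen x y := huniv ▸ mem_univ _
    exact IsUnit.of_mul_eq_one_right j (by linarith)
  · rintro _ _ _ _ ⟨a, rfl⟩ ⟨b, rfl⟩ ⟨c, rfl⟩ ⟨d, rfl⟩
    exact ⟨_, ⟨a - b + c - d, rfl⟩, y, right_mem_apGen x y, by ring⟩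

lemma mem_apGen_iff {x y n : ℤ} (hxy : y < x) (hlo : y - (x - y) < n) (hhi : n < x + (x - y)) :
    n ∈ apGen x y ↔ n = y ∨ n = x := by
  refine ⟨?_, by rintro (rfl | rfl); exacts [right_mem_apGen _ _, left_mem_apGen _ _]⟩
  rintro ⟨j, rfl⟩
  have hD : 0 ≤ x - y := by linarith
  have hj₁ : -1 < j := lt_of_mul_lt_mul_right (by linarith : -1 * (x - y) < j * (x - y)) hD
  have hj₂ : j < 2 := lt_of_mul_lt_mul_right (by linarith : j * (x - y) < 2 * (x - y)) hD
  obtain rfl | rfl : j = 0 ∨ j = 1 := by omega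
  exacts [Or.inl (by ring), Or.inr (by ring)]

section Partition

variable {P : ℕ → ℕ}

lemma IsPartition.antitone (hP : IsPartition P) : Antitone P :=
  antitone_nat_of_succ_le hP.1

lemma IsPartition.strictAnti_sub (hP : IsPartition P) : StrictAnti fun i : ℕ => (P i : ℤ) - i :=
  strictAnti_nat_of_succ_lt fun i => by have := hP.1 i; push_cast; omega

lemma IsPartition.lt_conj_zero (hP : IsPartition P) {m : ℕ} (hm : 0 < P m) : m < conj P 0 := by
  obtain ⟨N, hN⟩ := hP.2
  have hfin : {i | 0 < P i}.Finite :=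
    (finite_Iio N).subset fun i hi => by_contra fun h => by simp_all [hN i (not_lt.1 h)]
  have hsub : Iic m ⊆ {i | 0 < P i} := fun i hi => hm.trans_le (hP.antitone hi)
  have := ncard_le_ncard hsub hfin
  rw [ncard_Iic_nat] at this
  exact this

lemma IsPartition.sub_ne_sub_sub_one (hP : IsPartition P) {a : ℕ} (ha : P (a + 1) < P a)
    (i : ℕ) : (P i : ℤ) - i ≠ P a - a - 1 := by
  rcases le_or_gt i a with h | h
  · have := hP.strictAnti_sub.antitone h
    omega
  · have := hP.strictAnti_sub.antitone (show a + 1 ≤ i by omega)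
    push_cast at this
    omega

lemma psum_eq_sum_range {f : ℕ → ℕ} {N : ℕ} (hN : ∀ n ≥ N, f n = 0) :
    psum f = ∑ i ∈ Finset.range N, f i :=
  finsum_eq_sum_of_support_subset f fun i hi =>
    Finset.mem_range.2 (by_contra fun h => hi (hN i (not_lt.1 h)))

lemma sum_range_le_psum {f : ℕ → ℕ} {N : ℕ} (hN : ∀ n ≥ N, f n = 0) (n : ℕ) :
    ∑ i ∈ Finset.range n, f i ≤ psum f := by
  rw [psum_eq_sum_range fun m hm => hN m (le_of_max_le_right hm)]
  exact Finset.sum_le_sum_of_subset (Finset.range_subset_range.2 (le_max_left n N))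

lemma update_eq_zero_of_ge {f : ℕ → ℕ} {N i b : ℕ} (hN : ∀ n ≥ N, f n = 0) (hb : b ≤ f i) :
    ∀ n ≥ N, update f i b n = 0 := fun n hn => by
  rw [update_apply]; split_ifs <;> simp_all

lemma psum_update_pred {f : ℕ → ℕ} {N i : ℕ} (hN : ∀ n ≥ N, f n = 0) (hi : 0 < f i) :
    psum (update f i (f i - 1)) + 1 = psum f := by
  have hiN : i ∈ Finset.range N := Finset.mem_range.2 (by_contra fun h => by simp_all)
  rw [psum_eq_sum_range hN, psum_eq_sum_range (update_eq_zero_of_ge hN (Nat.sub_le _ 1)),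
    Finset.sum_update_of_mem hiN, Finset.sum_eq_add_sum_sdiff_singleton_of_mem hiN]
  omega

lemma psum_update_update {f : ℕ → ℕ} {N k : ℕ} (hN : ∀ n ≥ N, f n = 0) (hk : k ≠ 0)
    (h0 : 0 < f 0) (hk0 : 0 < f k) :
    psum (update (update f 0 (f 0 - 1)) k (f k - 1)) + 2 = psum f := by
  have h₁ := psum_update_pred hN h0
  have h₂ := psum_update_pred (update_eq_zero_of_ge hN (Nat.sub_le _ 1)) (i := k)
    (by rwa [update_of_ne hk])
  rw [update_of_ne hk] at h₂
  omega

end Partition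

section Displacement

variable {P : ℕ → ℕ} {Λ : Set ℤ} {k : ℕ}

lemma upDisp_eq_self (h : ∀ i, (i = 0 ∨ P i < P (i - 1)) → (P i : ℤ) - i ∉ Λ) :
    upDisp P Λ = P :=
  funext fun i => if_neg fun hi => h i hi.2 hi.1

lemma downDisp_eq_update_update (hk : k ≠ 0)
    (h : ∀ i, ((P i : ℤ) - i - 1 ∈ Λ ∧ P (i + 1) < P i) ↔ i = 0 ∨ i = k) :
    downDisp P Λ = update (update P 0 (P 0 - 1)) k (P k - 1) := by
  funext i
  simp only [downDisp, h, update_apply]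
  split_ifs <;> simp_all

lemma upDisp_update_update (hP : IsPartition P) (hk : k ≠ 0) (hP10 : P 1 < P 0) (hPk : 0 < P k)
    (h : ∀ i, (i = 0 ∨ P i < P (i - 1)) → (P i : ℤ) - i ∉ Λ)
    (h0 : (P 0 : ℤ) - 1 ∈ Λ) (hkΛ : (P k : ℤ) - k - 1 ∈ Λ) :
    upDisp (update (update P 0 (P 0 - 1)) k (P k - 1)) Λ = P := by
  set Q := update (update P 0 (P 0 - 1)) k (P k - 1) with hQ
  have hQle : ∀ i, Q i ≤ P i := fun i => by
    simp only [hQ, update_apply]; split_ifs <;> subst_vars <;> omega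
  have hQ0 : Q 0 = P 0 - 1 := by simp [hQ, Ne.symm hk]
  have hQk : Q k = P k - 1 := update_self ..
  have hQk1 : Q k < Q (k - 1) := by
    have : P k ≤ P (k - 1) := hP.antitone (Nat.sub_le k 1)
    have : P k ≤ P 1 := hP.antitone (Nat.one_le_iff_ne_zero.2 hk)
    simp only [hQ, update_apply]
    split_ifs <;> omega
  funext i
  unfold upDisp
  rcases eq_or_ne i k with rfl | hik
  · rw [if_pos ⟨by convert hkΛ using 1; omega, Or.inr hQk1⟩]
    omega
  rcases eq_or_ne i 0 with rfl | hi0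
  · rw [if_pos ⟨by convert h0 using 1; omega, Or.inl rfl⟩]
    omega
  have hQi : Q i = P i := by simp [hQ, hik, hi0]
  rw [hQi, if_neg]
  rintro ⟨hmem, hcorner⟩
  exact h i (hcorner.imp_right fun hlt => hlt.trans_le (hQle _)) hmem

end Displacement

section CornerProgression

variable {P : ℕ → ℕ} {k : ℕ}

lemma mem_apGen_corners_iff (hP : IsPartition P) (hk : 1 ≤ k) (hP10 : P 1 < P 0)
    (hwin : 2 * ((P k : ℤ) - k - 1) - (P 0 - 1) < -conj P 0) {n : ℤ}
    (hlo : -(conj P 0 : ℤ) ≤ n) (hhi : n ≤ P 0) :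
    n ∈ apGen (P 0 - 1) (P k - k - 1) ↔ n = P k - k - 1 ∨ n = P 0 - 1 := by
  have : P k ≤ P 1 := hP.antitone hk
  exact mem_apGen_iff (by omega) (by linarith) (by omega)

lemma sub_notMem_apGen_corners (hP : IsPartition P) (hk : 1 ≤ k) (hP10 : P 1 < P 0)
    (hk' : P (k + 1) < P k) (hwin : 2 * ((P k : ℤ) - k - 1) - (P 0 - 1) < -conj P 0) {i : ℕ}
    (hi : i = 0 ∨ P i < P (i - 1)) : (P i : ℤ) - i ∉ apGen (P 0 - 1) (P k - k - 1) := by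
  have hiN : i ≤ conj P 0 := by
    rcases hi with rfl | hi
    · omega
    · have := hP.lt_conj_zero (m := i - 1) (by omega)
      omega
  have := hP.antitone (Nat.zero_le i)
  rw [mem_apGen_corners_iff hP hk hP10 hwin (by omega) (by omega)]
  rintro (h | h)
  · exact hP.sub_ne_sub_sub_one hk' i h
  · exact hP.sub_ne_sub_sub_one (a := 0) hP10 i (by simpa using h)

lemma sub_sub_one_mem_apGen_corners_iff (hP : IsPartition P) (hk : 1 ≤ k) (hP10 : P 1 < P 0)
    (hk' : P (k + 1) < P k) (hwin : 2 * ((P k : ℤ) - k - 1) - (P 0 - 1) < -conj P 0) (i : ℕ) :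
    ((P i : ℤ) - i - 1 ∈ apGen (P 0 - 1) (P k - k - 1) ∧ P (i + 1) < P i) ↔ i = 0 ∨ i = k := by
  constructor
  · rintro ⟨hmem, hrem⟩
    have hiN := hP.lt_conj_zero (m := i) (by omega)
    have := hP.antitone (Nat.zero_le i)
    rw [mem_apGen_corners_iff hP hk hP10 hwin (by omega) (by omega)] at hmem
    rcases hmem with h | h
    · exact Or.inr (hP.strictAnti_sub.injective (show (P i : ℤ) - i = P k - k by omega))
    · exact Or.inl (hP.strictAnti_sub.injective (show (P i : ℤ) - i = P 0 - (0 : ℕ) by omega))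
  · rintro (rfl | rfl)
    · exact ⟨by simpa using left_mem_apGen _ _, hP10⟩
    · exact ⟨right_mem_apGen _ _, hk'⟩

end CornerProgression

theorem stmt17_general (P : ℕ → ℕ) (k : ℕ) (hP : IsPartition P) (h1 : 0 < P 1)
    (hprim : 2 * (P 1 : ℤ) - 2 ≤ (P 0 : ℤ) - conj P 0)
    (hwt : (psum P : ℤ) ≤ 2 * (P 0 : ℤ) - 2)
    (hk1 : 1 ≤ k) (hk2 : P k = P 1) (hkmax : ∀ j, P j = P 1 → j ≤ k) :
    let Λ : Set ℤ :=
      {n : ℤ | ∃ j : ℤ, n = ((P k : ℤ) - k - 1) + j * (((P 0 : ℤ) - 1) - ((P k : ℤ) - k - 1))}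
    upDisp P Λ = P ∧
      downDisp P Λ = Function.update (Function.update P 0 (P 0 - 1)) k (P k - 1) ∧
      KLinked 2 (downDisp P Λ) P := by
  intro Λ
  obtain ⟨N, hN⟩ := hP.2
  have hP01 : P 0 + P 1 ≤ psum P := by
    simpa [Finset.sum_range_succ] using sum_range_le_psum hN 2
  have hP10 : P 1 < P 0 := by omega
  have hk' : P (k + 1) < P k :=
    (hP.1 k).lt_of_ne fun h => by have := hkmax (k + 1) (by omega); omega
  have hwin : 2 * ((P k : ℤ) - k - 1) - (P 0 - 1) < -conj P 0 := by omega
  have hadd := fun i => sub_notMem_apGen_corners (i := i) hP hk1 hP10 hk' hwin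
  have hdown : downDisp P Λ = update (update P 0 (P 0 - 1)) k (P k - 1) :=
    downDisp_eq_update_update (by omega) (sub_sub_one_mem_apGen_corners_iff hP hk1 hP10 hk' hwin)
  have hD : ¬IsUnit ((P 0 : ℤ) - 1 - (P k - k - 1)) := by
    have : P k ≤ P 0 := hP.antitone (Nat.zero_le k)
    rw [Int.isUnit_iff]; omega
  refine ⟨upDisp_eq_self hadd, hdown, ⟨Λ, isAP_apGen hD, ?_, rfl⟩, ?_⟩
  · rw [hdown]
    exact (upDisp_update_update hP (by omega) hP10 (by omega) hadd (left_mem_apGen _ _)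
      (right_mem_apGen _ _)).symm
  · rw [hdown, psum_update_update hN (by omega) (by omega) (by omega)]

/-- The inductive step for primitive partitions: displacing along the progression
generated by `P_0 - 1` and `P_k - k - 1` removes exactly the two corners at rows
`0` and `k`, giving a 2-linked pair. -/
theorem stmt17 (P : ℕ → ℕ) (k : ℕ) (hP : IsPartition P) (h0 : 0 < P 0) (h1 : 0 < P 1)
    (hprim : 2 * (P 1 : ℤ) - 2 ≤ (P 0 : ℤ) - conj P 0)
    (hwt : (psum P : ℤ) ≤ 2 * (P 0 : ℤ) - 2)
    (hk1 : 1 ≤ k) (hk2 : P k = P 1) (hkmax : ∀ j, P j = P 1 → j ≤ k) :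
    let Λ : Set ℤ :=
      {n : ℤ | ∃ j : ℤ, n = ((P k : ℤ) - k - 1) + j * (((P 0 : ℤ) - 1) - ((P k : ℤ) - k - 1))}
    upDisp P Λ = P ∧
      downDisp P Λ = Function.update (Function.update P 0 (P 0 - 1)) k (P k - 1) ∧
      KLinked 2 (downDisp P Λ) P :=
  stmt17_general P k hP h1 hprim hwt hk1 hk2 hkmax
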